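/- arXiv:2105.14591 — 5 statements merged into one kernel-verified Lean document; each statement's English description precedes it below -/
import Mathlib

section
/- Let λ : ℕ³ → [0,∞) be summable, and suppose that for all s, t in the closed complex unit disk, Σ_{i,k≥0} (s^i - 1)(t^k - 1) λ(i,0,k) = 0. Then λ(i,0,k) = 0 whenever i > 0 and k > 0. -/
/-! At `s = t = 0` the factor `(0 ^ i - 1) * (0 ^ k - 1)` is the indicator of `0 < i ∧ 0 < k`, so
the hypothesis says that the nonnegative terms `λ(i,0,k)` with `i, k > 0` have sum zero. -/

lemma eq_zero_of_tsum_tsum_eq_zero {α β : Type*} {f : α × β → ℝ} (hf : Summable f)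
    (hnonneg : 0 ≤ f) (h : ∑' a, ∑' b, f (a, b) = 0) : f = 0 := by
  rw [← hf.tsum_prod] at h
  exact (hasSum_zero_iff_of_nonneg hnonneg).mp (h ▸ hf.hasSum)

lemma zero_pow_sub_one_mul_zero_pow_sub_one {R : Type*} [Ring R] (i k : ℕ) :
    ((0 : R) ^ i - 1) * ((0 : R) ^ k - 1) = if 0 < i ∧ 0 < k then 1 else 0 := by
  rcases i with _ | i <;> rcases k with _ | k <;> simp

/-- If `λ : ℕ³ → [0,∞)` is summable and
`Σ_{i,k} (s^i - 1)(t^k - 1) λ(i,0,k) = 0` for all `s, t` in the closed complex unit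
disk, then `λ(i,0,k) = 0` whenever `i > 0` and `k > 0`. -/
theorem vanishing_cross_terms
    (L : ℕ × ℕ × ℕ → ℝ) (hL : Summable L) (hpos : ∀ v, 0 ≤ L v)
    (hzero : ∀ s t : ℂ, ‖s‖ ≤ 1 → ‖t‖ ≤ 1 →
      (∑' i : ℕ, ∑' k : ℕ, (s ^ i - 1) * (t ^ k - 1) * (L (i, 0, k) : ℂ)) = 0) :
    ∀ i k : ℕ, 0 < i → 0 < k → L (i, 0, k) = 0 := by
  set S : Set (ℕ × ℕ) := {p | 0 < p.1 ∧ 0 < p.2}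
  set g : ℕ × ℕ → ℝ := S.indicator fun p => L (p.1, 0, p.2)
  have hslice : Function.Injective fun p : ℕ × ℕ => (p.1, 0, p.2) := fun p q h => by
    simp_all [Prod.ext_iff]
  have hg : Summable g := (hL.comp_injective hslice).indicator S
  have hsum : ∑' i, ∑' k, g (i, k) = 0 := by
    have hterm (i k : ℕ) : ((0 : ℂ) ^ i - 1) * ((0 : ℂ) ^ k - 1) * (L (i, 0, k) : ℂ) = g (i, k) := by
      rw [zero_pow_sub_one_mul_zero_pow_sub_one]
      split_ifs with hik <;> simp [g, S, hik]
    have h := hzero 0 0 (by simp) (by simp)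
    simp_rw [hterm] at h
    exact_mod_cast h
  intro i k hi hk
  simpa [g, S, hi, hk] using
    congrFun (eq_zero_of_tsum_tsum_eq_zero hg (Set.indicator_nonneg fun p _ => hpos _) hsum) (i, k)
end

section
/- Let (rᵢ)_{i≥0} be nonnegative reals with r₀ > 0, r₁ > 0, r₂ > 0, satisfying the recursion rᵢ = (r₂ / (r₁² (i-1))) Σ_{k=1}^{i-1} r_k r_{i-k} for all i ≥ 2. Then rᵢ = r₁ (r₂/r₁)^{i-1} for all i ≥ 1. -/
/-!
By strong induction, every term `r k` with `1 ≤ k < i` is already geometric, so each summand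
`r k * r (i - k)` of the recursion equals `r₁² q^(i-2)` with `q = r₂ / r₁`. The `i - 1` equal
summands cancel the factor `i - 1` in the recursion, leaving `r₂ / r₁² · r₁² q^(i-2) = r₁ q^(i-1)`.
-/

theorem sum_Ico_geom_mul_geom (a q : ℝ) {i : ℕ} (hi : 1 ≤ i) :
    ∑ k ∈ Finset.Ico 1 i, a * q ^ (k - 1) * (a * q ^ (i - k - 1)) =
      ((i : ℝ) - 1) * (a ^ 2 * q ^ (i - 2)) := by
  have hterm : ∀ k ∈ Finset.Ico 1 i,
      a * q ^ (k - 1) * (a * q ^ (i - k - 1)) = a ^ 2 * q ^ (i - 2) := by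
    intro k hk
    rw [Finset.mem_Ico] at hk
    rw [show i - 2 = (k - 1) + (i - k - 1) by omega, pow_add]
    ring
  rw [Finset.sum_congr rfl hterm, Finset.sum_const, Nat.card_Ico, nsmul_eq_mul,
    Nat.cast_sub hi, Nat.cast_one]

theorem recursion_forces_geometric_general
    (r : ℕ → ℝ)
    (h1 : 0 < r 1)
    (hrec : ∀ i : ℕ, 2 ≤ i →
      r i = r 2 / (r 1 ^ 2 * ((i : ℝ) - 1)) * ∑ k ∈ Finset.Ico 1 i, r k * r (i - k)) :
    ∀ i : ℕ, 1 ≤ i → r i = r 1 * (r 2 / r 1) ^ (i - 1) := by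
  intro i
  induction i using Nat.strong_induction_on with
  | _ i ih =>
    intro hi
    obtain rfl | h2i : i = 1 ∨ 2 ≤ i := by omega
    · simp
    have hsum : ∑ k ∈ Finset.Ico 1 i, r k * r (i - k) =
        ∑ k ∈ Finset.Ico 1 i, r 1 * (r 2 / r 1) ^ (k - 1) * (r 1 * (r 2 / r 1) ^ (i - k - 1)) :=
      Finset.sum_congr rfl fun k hk => by
        rw [Finset.mem_Ico] at hk
        rw [ih k hk.2 hk.1, ih (i - k) (by omega) (by omega)]
    have hi1 : (i : ℝ) - 1 ≠ 0 := by
      have : (2 : ℝ) ≤ i := by exact_mod_cast h2i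
      linarith
    rw [hrec i h2i, hsum, sum_Ico_geom_mul_geom _ _ hi,
      show i - 1 = (i - 2) + 1 by omega, pow_succ (r 2 / r 1) (i - 2)]
    field_simp

/-- The recursion `rᵢ = (r₂/(r₁²(i-1))) Σ_{k=1}^{i-1} r_k r_{i-k}` for `i ≥ 2`,
with `r₀, r₁, r₂ > 0` and all `rᵢ ≥ 0`, forces the geometric form
`rᵢ = r₁ (r₂/r₁)^{i-1}` for all `i ≥ 1`. -/
theorem recursion_forces_geometric
    (r : ℕ → ℝ) (hnonneg : ∀ i, 0 ≤ r i)
    (h0 : 0 < r 0) (h1 : 0 < r 1) (h2 : 0 < r 2)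
    (hrec : ∀ i : ℕ, 2 ≤ i →
      r i = r 2 / (r 1 ^ 2 * ((i : ℝ) - 1)) * ∑ k ∈ Finset.Ico 1 i, r k * r (i - k)) :
    ∀ i : ℕ, 1 ≤ i → r i = r 1 * (r 2 / r 1) ^ (i - 1) :=
  recursion_forces_geometric_general r h1 hrec
end

section
/- For the negative binomial thinning process, the conditional pgf E[z^{X_t} | X_{t-1} = x] equals (p/(1-qz))^{θ(1-ρ)} · ₂F₁(θρ, -x; θ; 1-z), where q = 1-p. -/
/-!
The two factors are computed separately. The negative binomial factor is the binomial series
`(1 - t)^(-α) = ∑ (α)ₖ tᵏ / k!` at `t = (1 - p) z`. For the beta-binomial factor, write the pmf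
as `C(x,k) (a)ₖ (b)ₓ₋ₖ / (a+b)ₓ`, expand `zᵏ = ((z - 1) + 1)ᵏ` and collect powers of `z - 1`:
the Chu–Vandermonde identity for rising factorials sums the coefficient of `(z - 1)ⁿ` to
`C(x,n) (a)ₙ (a+n+b)ₓ₋ₙ`, and dividing by `(a+b)ₓ = (a+b)ₙ (a+b+n)ₓ₋ₙ` leaves the terms of
`₂F₁(a, -x; a+b; 1-z)`.
-/

/-- Negative binomial pmf: `Γ(α+k)/(Γ(α) k!) p^α (1-p)^k`. -/
noncomputable def nbPmf (α p : ℝ) (k : ℕ) : ℝ :=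
  Real.Gamma (α + k) / (Real.Gamma α * (Nat.factorial k)) * p ^ α * (1 - p) ^ k

/-- Beta function `B(a,b) = Γ(a)Γ(b)/Γ(a+b)`. -/
noncomputable def betaFn (a b : ℝ) : ℝ :=
  Real.Gamma a * Real.Gamma b / Real.Gamma (a + b)

/-- Beta-binomial pmf `C(n,k) B(a+k, b+n-k)/B(a,b)`. -/
noncomputable def betaBinPmf (n : ℕ) (a b : ℝ) (k : ℕ) : ℝ :=
  (n.choose k : ℝ) * betaFn (a + k) (b + (n - k : ℕ)) / betaFn a b

/-- Gauss' hypergeometric function `₂F₁(a, -x; c; w)` with `-x` a nonpositive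
integer, so the series terminates: a polynomial of degree `x` in `w`. -/
noncomputable def hyp2F1neg (a : ℝ) (x : ℕ) (c : ℝ) (w : ℝ) : ℝ :=
  ∑ n ∈ Finset.range (x + 1),
    ((ascPochhammer ℝ n).eval a * (ascPochhammer ℝ n).eval (-(x : ℝ)) /
        (ascPochhammer ℝ n).eval c) * w ^ n / (Nat.factorial n)

open Finset Polynomial

theorem ascPochhammer_add_eval {S : Type*} [CommSemiring S] (n m : ℕ) (a : S) :
    (ascPochhammer S (n + m)).eval a =
      (ascPochhammer S n).eval a * (ascPochhammer S m).eval (a + n) := by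
  rw [← ascPochhammer_mul, eval_mul, eval_comp, eval_add, eval_X, eval_natCast]

theorem ascPochhammer_eval_add {S : Type*} [CommSemiring S] (u v : S) (m : ℕ) :
    (ascPochhammer S m).eval (u + v) = ∑ ij ∈ antidiagonal m,
      (m.choose ij.1 : S) * ((ascPochhammer S ij.1).eval u * (ascPochhammer S ij.2).eval v) := by
  induction m with
  | zero => simp
  | succ m ih =>
    rw [sum_antidiagonal_choose_succ_mul
      (fun i j => (ascPochhammer S i).eval u * (ascPochhammer S j).eval v),
      ascPochhammer_succ_eval, ih, sum_mul, ← sum_add_distrib]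
    refine sum_congr rfl fun ij hij => ?_
    rw [HasAntidiagonal.mem_antidiagonal] at hij
    rw [← Nat.choose_symm_of_eq_add hij.symm, ascPochhammer_succ_eval, ascPochhammer_succ_eval,
      ← hij]
    push_cast
    ring

theorem ascPochhammer_eval_neg_natCast {R : Type*} [Ring R] (x n : ℕ) :
    (ascPochhammer R n).eval (-(x : R)) = (-1) ^ n * (n.factorial * x.choose n : ℕ) := by
  rw [ascPochhammer_eval_neg_eq_descPochhammer, descPochhammer_eval_eq_descFactorial,
    Nat.descFactorial_eq_factorial_mul_choose]

theorem Real.Gamma_add_nat_eq_mul_ascPochhammer {a : ℝ} (ha : 0 < a) (n : ℕ) :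
    Real.Gamma (a + n) = Real.Gamma a * (ascPochhammer ℝ n).eval a := by
  induction n with
  | zero => simp
  | succ n ih =>
    rw [Nat.cast_succ, ← add_assoc, Real.Gamma_add_one (by positivity), ih,
      ascPochhammer_succ_eval]
    ring

theorem Ring.choose_add_sub_one_eq_ascPochhammer_div {K : Type*} [Field K] [CharZero K]
    (r : K) (n : ℕ) : Ring.choose (r + n - 1) n = (ascPochhammer K n).eval r / n.factorial := by
  rw [← Ring.multichoose_eq, eq_div_iff (Nat.cast_ne_zero.2 n.factorial_ne_zero), mul_comm,
    ← nsmul_eq_mul, Ring.factorial_nsmul_multichoose_eq_ascPochhammer,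
    ascPochhammer_smeval_eq_eval]

theorem pow_eq_sum_choose_mul_sub_one_pow {R : Type*} [CommRing R] (z : R) {k x : ℕ}
    (hk : k ≤ x) : z ^ k = ∑ n ∈ range (x + 1), (z - 1) ^ n * (k.choose n : R) := by
  conv_lhs => rw [← sub_add_cancel z 1, add_pow]
  simp only [one_pow, mul_one]
  refine sum_subset (range_subset_range.2 (by omega)) fun n _ hn => ?_
  rw [Nat.choose_eq_zero_of_lt (by simpa using hn), Nat.cast_zero, mul_zero]

theorem sum_choose_mul_choose_mul_ascPochhammer {R : Type*} [CommRing R] (a b : R) {n x : ℕ}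
    (hn : n ≤ x) :
    ∑ k ∈ range (x + 1), (x.choose k * k.choose n : R) *
        ((ascPochhammer R k).eval a * (ascPochhammer R (x - k)).eval b) =
      x.choose n * ((ascPochhammer R n).eval a * (ascPochhammer R (x - n)).eval (a + n + b)) := by
  obtain ⟨m, rfl⟩ := Nat.exists_eq_add_of_le hn
  have below : ∀ k ∈ range n, (((n + m).choose k * k.choose n : ℕ) : R) *
      ((ascPochhammer R k).eval a * (ascPochhammer R (n + m - k)).eval b) = 0 := fun k hk => by
    rw [Nat.choose_eq_zero_of_lt (mem_range.1 hk), mul_zero, Nat.cast_zero, zero_mul]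
  have above : ∀ i ∈ range (m + 1), (((n + m).choose (n + i) * (n + i).choose n : ℕ) : R) *
      ((ascPochhammer R (n + i)).eval a * (ascPochhammer R (n + m - (n + i))).eval b) =
      (n + m).choose n * (ascPochhammer R n).eval a *
        (m.choose i * ((ascPochhammer R i).eval (a + n) * (ascPochhammer R (m - i)).eval b)) :=
    fun i _ => by
      rw [Nat.choose_mul (Nat.le_add_right n i), Nat.add_sub_cancel_left,
        Nat.add_sub_cancel_left, Nat.add_sub_add_left, ascPochhammer_add_eval]
      push_cast
      ring
  simp_rw [← Nat.cast_mul]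
  rw [show n + m + 1 = n + (m + 1) by ring, sum_range_add, sum_eq_zero below, zero_add,
    sum_congr rfl above, ← mul_sum, Nat.add_sub_cancel_left,
    ascPochhammer_eval_add (a + n) b m, Nat.sum_antidiagonal_eq_sum_range_succ_mk, mul_assoc]

theorem sum_choose_mul_ascPochhammer_mul_pow {R : Type*} [CommRing R] (a b z : R) (x : ℕ) :
    ∑ k ∈ range (x + 1), (x.choose k : R) *
        ((ascPochhammer R k).eval a * (ascPochhammer R (x - k)).eval b) * z ^ k =
      ∑ n ∈ range (x + 1), (x.choose n : R) *
        ((ascPochhammer R n).eval a * (ascPochhammer R (x - n)).eval (a + n + b)) * (z - 1) ^ n :=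
  calc _ = ∑ k ∈ range (x + 1), ∑ n ∈ range (x + 1), (x.choose k * k.choose n : R) *
          ((ascPochhammer R k).eval a * (ascPochhammer R (x - k)).eval b) * (z - 1) ^ n :=
        sum_congr rfl fun k hk => by
          rw [pow_eq_sum_choose_mul_sub_one_pow z (mem_range_succ_iff.1 hk), mul_sum]
          exact sum_congr rfl fun n _ => by ring
    _ = _ := by
        rw [sum_comm]
        exact sum_congr rfl fun n hn => by
          rw [← sum_mul, sum_choose_mul_choose_mul_ascPochhammer a b (mem_range_succ_iff.1 hn),
            mul_assoc]

theorem hyp2F1neg_eq_sum_choose (a c w : ℝ) (x : ℕ) :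
    hyp2F1neg a x c w = ∑ n ∈ range (x + 1),
      (x.choose n : ℝ) * ((ascPochhammer ℝ n).eval a / (ascPochhammer ℝ n).eval c) * (-w) ^ n := by
  refine sum_congr rfl fun n _ => ?_
  have hn : (n.factorial : ℝ) ≠ 0 := Nat.cast_ne_zero.2 n.factorial_ne_zero
  rw [ascPochhammer_eval_neg_natCast, neg_pow w, Nat.cast_mul]
  field_simp

theorem betaBinPmf_eq_ascPochhammer {a b : ℝ} (ha : 0 < a) (hb : 0 < b) {x k : ℕ} (hk : k ≤ x) :
    betaBinPmf x a b k = x.choose k *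
      ((ascPochhammer ℝ k).eval a * (ascPochhammer ℝ (x - k)).eval b) /
        (ascPochhammer ℝ x).eval (a + b) := by
  have hab : a + k + (b + (x - k : ℕ)) = a + b + x := by
    rw [Nat.cast_sub hk]
    ring
  have := (Real.Gamma_pos_of_pos ha).ne'
  have := (Real.Gamma_pos_of_pos hb).ne'
  have := (Real.Gamma_pos_of_pos (add_pos ha hb)).ne'
  have := (ascPochhammer_pos x _ (add_pos ha hb)).ne'
  rw [betaBinPmf, betaFn, betaFn, hab, Real.Gamma_add_nat_eq_mul_ascPochhammer ha,
    Real.Gamma_add_nat_eq_mul_ascPochhammer hb,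
    Real.Gamma_add_nat_eq_mul_ascPochhammer (add_pos ha hb)]
  field_simp

theorem sum_betaBinPmf_mul_pow {a b : ℝ} (ha : 0 < a) (hb : 0 < b) (x : ℕ) (z : ℝ) :
    ∑ k ∈ range (x + 1), betaBinPmf x a b k * z ^ k = hyp2F1neg a x (a + b) (1 - z) := by
  have hsplit : ∀ n ≤ x, (ascPochhammer ℝ x).eval (a + b) =
      (ascPochhammer ℝ n).eval (a + b) * (ascPochhammer ℝ (x - n)).eval (a + n + b) := by
    intro n hn
    rw [add_right_comm, ← ascPochhammer_add_eval, Nat.add_sub_cancel' hn]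
  calc _ = (∑ k ∈ range (x + 1), (x.choose k : ℝ) *
          ((ascPochhammer ℝ k).eval a * (ascPochhammer ℝ (x - k)).eval b) * z ^ k) /
            (ascPochhammer ℝ x).eval (a + b) := by
        rw [sum_div]
        refine sum_congr rfl fun k hk => ?_
        rw [betaBinPmf_eq_ascPochhammer ha hb (mem_range_succ_iff.1 hk)]
        ring
    _ = ∑ n ∈ range (x + 1), (x.choose n : ℝ) *
          ((ascPochhammer ℝ n).eval a / (ascPochhammer ℝ n).eval (a + b)) * (z - 1) ^ n := by
        rw [sum_choose_mul_ascPochhammer_mul_pow, sum_div]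
        refine sum_congr rfl fun n hn => ?_
        have := (ascPochhammer_pos n _ (add_pos ha hb)).ne'
        have := (ascPochhammer_pos (x - n) (a + n + b) (by positivity)).ne'
        rw [hsplit n (mem_range_succ_iff.1 hn)]
        field_simp
    _ = _ := by rw [hyp2F1neg_eq_sum_choose, neg_sub]

theorem hasSum_nbPmf_mul_pow {α p z : ℝ} (hα : 0 < α) (hp : 0 ≤ p) (hz : |(1 - p) * z| < 1) :
    HasSum (fun k => nbPmf α p k * z ^ k) ((p / (1 - (1 - p) * z)) ^ α) := by
  have hq : 0 < 1 - (1 - p) * z := by linarith [le_abs_self ((1 - p) * z)]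
  have hseries := (Real.one_div_one_sub_rpow_hasFPowerSeriesOnBall_zero α).hasSum
    (y := (1 - p) * z)
    (by rwa [← ENNReal.ofReal_one, Metric.eball_ofReal, mem_ball_zero_iff, Real.norm_eq_abs])
  simp only [FormalMultilinearSeries.ofScalars_apply_eq, smul_eq_mul, zero_add,
    Ring.choose_add_sub_one_eq_ascPochhammer_div] at hseries
  have hterm : ∀ k : ℕ, nbPmf α p k * z ^ k =
      p ^ α * ((ascPochhammer ℝ k).eval α / k.factorial * ((1 - p) * z) ^ k) := fun k => by
    have := (Real.Gamma_pos_of_pos hα).ne'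
    rw [nbPmf, Real.Gamma_add_nat_eq_mul_ascPochhammer hα, mul_pow]
    field_simp
  rw [funext hterm, Real.div_rpow hp hq.le, div_eq_mul_one_div]
  exact hseries.mul_left (p ^ α)

/-- Conditional pgf of the NB thinning process:
`E[z^{X_t} | X_{t-1} = x] = (p/(1-qz))^{θ(1-ρ)} ₂F₁(θρ, -x; θ; 1-z)`. -/
theorem nb_thinning_conditional_pgf
    (θ ρ p z : ℝ) (hθ : 0 < θ) (hρ0 : 0 < ρ) (hρ1 : ρ < 1)
    (hp0 : 0 < p) (hp1 : p < 1) (hz : z ∈ Set.Icc (0 : ℝ) 1) (x : ℕ) :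
    (∑ k ∈ Finset.range (x + 1), betaBinPmf x (θ * ρ) (θ * (1 - ρ)) k * z ^ k) *
        (∑' k : ℕ, nbPmf (θ * (1 - ρ)) p k * z ^ k)
      = (p / (1 - (1 - p) * z)) ^ (θ * (1 - ρ)) * hyp2F1neg (θ * ρ) x θ (1 - z) := by
  obtain ⟨hz0, hz1⟩ := hz
  have ha : 0 < θ * ρ := mul_pos hθ hρ0
  have hb : 0 < θ * (1 - ρ) := mul_pos hθ (sub_pos.2 hρ1)
  have hqz : |(1 - p) * z| < 1 := by
    rw [abs_of_nonneg (mul_nonneg (sub_pos.2 hp1).le hz0)]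
    nlinarith
  rw [sum_betaBinPmf_mul_pow ha hb, (hasSum_nbPmf_mul_pow hb hp0.le hqz).tsum_eq, mul_comm,
    show θ * ρ + θ * (1 - ρ) = θ by ring]
end

section
/- For the negative binomial thinning process at three consecutive times, P[X₁ = 0 and X₃ = 0 | X₂ = 2] = [p^{θ(1-ρ)}(1-ρ)]² · [(1+θ(1-ρ))/(1+θ)]². -/
/-! By `Γ(x + n) = Γ(x) x (x + 1) ⋯ (x + n - 1)`, the beta-binomial mass at `0` is
`∏_{i<n} (b + i)/(a + b + i)`; for `n = 2`, `a + b = θ`, `b = θ(1 - ρ)` this is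
`(1 - ρ)(1 + θ(1 - ρ))/(1 + θ)`, while the negative binomial mass at `0` is `p ^ (θ(1 - ρ))`. -/

open Finset

theorem Real.Gamma_add_nat_eq_mul_prod {x : ℝ} (hx : 0 < x) (n : ℕ) :
    Real.Gamma (x + n) = Real.Gamma x * ∏ i ∈ range n, (x + i) := by
  induction n with
  | zero => simp
  | succ n ih =>
    rw [prod_range_succ, Nat.cast_succ, ← add_assoc,
      Real.Gamma_add_one (by positivity), ih]
    ring

theorem nbPmf_zero {α : ℝ} (hα : 0 < α) (p : ℝ) : nbPmf α p 0 = p ^ α := by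
  simp [nbPmf, div_self (Real.Gamma_pos_of_pos hα).ne']

theorem betaBinPmf_zero (n : ℕ) {a b : ℝ} (ha : 0 < a) (hb : 0 < b) :
    betaBinPmf n a b 0 = ∏ i ∈ range n, (b + i) / (a + b + i) := by
  have hΓa := (Real.Gamma_pos_of_pos ha).ne'
  have hΓb := (Real.Gamma_pos_of_pos hb).ne'
  have hΓab := (Real.Gamma_pos_of_pos (add_pos ha hb)).ne'
  have hprod : ∏ i ∈ range n, (a + b + i) ≠ 0 :=
    prod_ne_zero_iff.mpr fun i _ ↦ by positivity
  simp only [betaBinPmf, betaFn, Nat.choose_zero_right, Nat.sub_zero, Nat.cast_one,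
    CharP.cast_eq_zero, add_zero, one_mul, ← add_assoc]
  rw [prod_div_distrib, Real.Gamma_add_nat_eq_mul_prod hb,
    Real.Gamma_add_nat_eq_mul_prod (add_pos ha hb)]
  field_simp

theorem nb_thinning_cond_prob_020_general
    (θ ρ p : ℝ) (hθ : 0 < θ) (hρ0 : 0 < ρ) (hρ1 : ρ < 1) :
    (betaBinPmf 2 (θ * ρ) (θ * (1 - ρ)) 0 * nbPmf (θ * (1 - ρ)) p 0) ^ 2
      = (p ^ (θ * (1 - ρ)) * (1 - ρ)) ^ 2 * ((1 + θ * (1 - ρ)) / (1 + θ)) ^ 2 := by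
  have hb : 0 < θ * (1 - ρ) := mul_pos hθ (sub_pos.mpr hρ1)
  rw [betaBinPmf_zero 2 (mul_pos hθ hρ0) hb, nbPmf_zero hb,
    show θ * ρ + θ * (1 - ρ) = θ by ring]
  simp only [prod_range_succ, prod_range_zero, Nat.cast_zero, Nat.cast_one]
  field_simp
  ring

/-- For the NB thinning process: given `X₂ = 2`, the variables `X₁, X₃` are iid,
each distributed as `ξ + ζ` with `ξ ~ BetaBinomial(2; θρ, θ(1-ρ))` and
`ζ ~ NB(θ(1-ρ), p)` independent; then
`P[X₁ = 0, X₃ = 0 | X₂ = 2] = [p^{θ(1-ρ)}(1-ρ)]² [(1+θ(1-ρ))/(1+θ)]²`. -/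
theorem nb_thinning_cond_prob_020
    (θ ρ p : ℝ) (hθ : 0 < θ) (hρ0 : 0 < ρ) (hρ1 : ρ < 1)
    (hp0 : 0 < p) (hp1 : p < 1) :
    (betaBinPmf 2 (θ * ρ) (θ * (1 - ρ)) 0 * nbPmf (θ * (1 - ρ)) p 0) ^ 2
      = (p ^ (θ * (1 - ρ)) * (1 - ρ)) ^ 2 * ((1 + θ * (1 - ρ)) / (1 + θ)) ^ 2 :=
  nb_thinning_cond_prob_020_general θ ρ p hθ hρ0 hρ1
end

section
/- For all θ > 0 and 0 < ρ < 1, [(1+θ(1-ρ))/(1+θ)]² ≠ (1+θ(1-ρ)²)/(1+θ). Consequently the three-dimensional marginals of the negative binomial thinning process and the negative binomial random-measure process differ. -/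
theorem one_add_mul_one_sub_div_sq_ne {K : Type*} [Field K] {θ ρ : K}
    (hθ : θ ≠ 0) (hρ : ρ ≠ 0) (hθ1 : 1 + θ ≠ 0) :
    ((1 + θ * (1 - ρ)) / (1 + θ)) ^ 2 ≠ (1 + θ * (1 - ρ) ^ 2) / (1 + θ) := by
  intro h
  rw [div_pow, div_eq_div_iff (pow_ne_zero 2 hθ1) hθ1] at h
  have defect : (1 + θ) * (1 + θ * (1 - ρ) ^ 2) - (1 + θ * (1 - ρ)) ^ 2 = θ * ρ ^ 2 := by ring
  have : θ * ρ ^ 2 * (1 + θ) = 0 := by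
    rw [← defect]
    linear_combination -h
  simp [hθ, hρ, hθ1] at this

theorem thinning_vs_random_measure_differ_general
    (θ ρ : ℝ) (hθ : 0 < θ) (hρ0 : 0 < ρ) :
    ((1 + θ * (1 - ρ)) / (1 + θ)) ^ 2 ≠ (1 + θ * (1 - ρ) ^ 2) / (1 + θ) :=
  one_add_mul_one_sub_div_sq_ne hθ.ne' hρ0.ne' (by positivity)

/-- For all `θ > 0` and `0 < ρ < 1`,
`[(1+θ(1-ρ))/(1+θ)]² ≠ (1+θ(1-ρ)²)/(1+θ)`; hence the three-dimensional marginals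
of the NB thinning and NB random-measure processes differ. -/
theorem thinning_vs_random_measure_differ
    (θ ρ : ℝ) (hθ : 0 < θ) (hρ0 : 0 < ρ) (hρ1 : ρ < 1) :
    ((1 + θ * (1 - ρ)) / (1 + θ)) ^ 2 ≠ (1 + θ * (1 - ρ) ^ 2) / (1 + θ) :=
  thinning_vs_random_measure_differ_general θ ρ hθ hρ0
end
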